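/- In a median graph G, let X be a POF and v a vertex such that, for each Θ-class E_i ∈ X, there is an edge of E_i incident to v. Then there exists an induced subgraph Q of G isomorphic to the hypercube Q_{|X|} which contains v and all the edges of classes of X incident to v, and the set of Θ-classes of the edges of Q is exactly X. -/

import Mathlib

/-!
In a median graph the Θ-class of an edge `ab` consists exactly of the edges joining the halfspaces
`W(a,b)` and `W(b,a)` (Djoković–Winkler), and halfspaces are convex. Hence a vertex has at most
one neighbour across a given class, and two orthogonal classes with edges `vw₁`, `vw₂` at `v` span
a square at `v`, whose fourth corner is the median of `w₁`, `w₂` and a vertex beyond both cuts.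
Adding the classes of `X` one at a time and following their edges from every vertex built so far
gives a map from the subsets of `X` to vertices. On which side of the cut of a class `C` the image
of `B` lies records whether `C ∈ B`, so this map embeds the cube `Q_|X|` with its edges in direction
`C` lying in `C`.
-/

namespace MedianPaper

variable {V : Type*}

/-- The metric interval `I(u,v)`: vertices on shortest `(u,v)`-paths. -/
def interval (G : SimpleGraph V) (u v : V) : Set V :=
  {w | G.dist u w + G.dist w v = G.dist u v}

/-- A median graph: a connected graph in which every triple of vertices
has a unique median. -/
def MedianGraph (G : SimpleGraph V) : Prop :=
  G.Connected ∧ ∀ x y z : V, ∃! m : V,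
    m ∈ interval G x y ∧ m ∈ interval G y z ∧ m ∈ interval G z x

/-- `u v x y` span a 4-cycle `u-v-y-x-u`, with opposite edge pairs
`(uv, xy)` and `(ux, vy)`. -/
def IsSquare (G : SimpleGraph V) (u v x y : V) : Prop :=
  G.Adj u v ∧ G.Adj x y ∧ G.Adj u x ∧ G.Adj v y ∧ u ≠ y ∧ v ≠ x

/-- Two edges are in relation Θ₀ if they are opposite edges of a common 4-cycle. -/
def Theta0 (G : SimpleGraph V) (e f : Sym2 V) : Prop :=
  ∃ u v x y : V, IsSquare G u v x y ∧ e = s(u, v) ∧ f = s(x, y)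

/-- Θ : the reflexive-transitive closure of Θ₀ on the edges of `G`. -/
def Theta (G : SimpleGraph V) (e f : Sym2 V) : Prop :=
  e ∈ G.edgeSet ∧ f ∈ G.edgeSet ∧ Relation.ReflTransGen (Theta0 G) e f

/-- The Θ-classes of `G`: equivalence classes of edges under Θ. -/
def ThetaClass (G : SimpleGraph V) (C : Set (Sym2 V)) : Prop :=
  ∃ e ∈ G.edgeSet, C = {f | Theta G e f}

/-- The edge set `C` separates `u` from `v` : they lie in different
components of `G` minus `C`. -/
def Separates (G : SimpleGraph V) (C : Set (Sym2 V)) (u v : V) : Prop :=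
  ¬ (G.deleteEdges C).Reachable u v

/-- The signature `σ_{u,v}`: Θ-classes separating `u` from `v`. -/
def signature (G : SimpleGraph V) (u v : V) : Set (Set (Sym2 V)) :=
  {C | ThetaClass G C ∧ Separates G C u v}

/-- `H`, `H'` are the two connected components (halfspaces) of `G` deprived
of the edges in `C`. -/
def IsHalfspacePair (G : SimpleGraph V) (C : Set (Sym2 V)) (H H' : Set V) : Prop :=
  H.Nonempty ∧ H'.Nonempty ∧ Disjoint H H' ∧ H ∪ H' = Set.univ ∧
  (∀ x ∈ H, ∀ y ∈ H, (G.deleteEdges C).Reachable x y) ∧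
  (∀ x ∈ H', ∀ y ∈ H', (G.deleteEdges C).Reachable x y) ∧
  (∀ x ∈ H, ∀ y ∈ H', ¬ (G.deleteEdges C).Reachable x y)

/-- The boundary of a halfspace `H` of the Θ-class `C` : vertices of `H`
incident to an edge of `C`. -/
def boundarySet (G : SimpleGraph V) (C : Set (Sym2 V)) (H : Set V) : Set V :=
  {x | x ∈ H ∧ ∃ y, G.Adj x y ∧ s(x, y) ∈ C}

/-- Orthogonality of Θ-classes: there is a common square using both. -/
def Orthogonal (G : SimpleGraph V) (C₁ C₂ : Set (Sym2 V)) : Prop :=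
  ∃ u v x y : V, IsSquare G u v x y ∧
    s(u, v) ∈ C₁ ∧ s(x, y) ∈ C₁ ∧ s(u, x) ∈ C₂ ∧ s(v, y) ∈ C₂

/-- A pairwise orthogonal family (POF) of Θ-classes. -/
def IsPOF (G : SimpleGraph V) (X : Set (Set (Sym2 V))) : Prop :=
  (∀ C ∈ X, ThetaClass G C) ∧
  ∀ C ∈ X, ∀ C' ∈ X, C ≠ C' → Orthogonal G C C'

/-- The `k`-dimensional hypercube graph, on subsets of `{1,…,k}`;
two subsets are adjacent iff their symmetric difference has one element. -/
def cubeGraph (k : ℕ) : SimpleGraph (Finset (Fin k)) where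
  Adj A B := (symmDiff A B).card = 1
  symm := by
    constructor
    intro A B h
    rwa [symmDiff_comm] at h
  loopless := by
    constructor
    intro A h
    simp [symmDiff_self] at h

/-- `S` induces a hypercube of dimension `k` in `G`. -/
def IsCubeDim (G : SimpleGraph V) (S : Set V) (k : ℕ) : Prop :=
  Nonempty ((G.induce S) ≃g cubeGraph k)

/-- `S` induces a hypercube in `G`. -/
def IsInducedCube (G : SimpleGraph V) (S : Set V) : Prop :=
  ∃ k, IsCubeDim G S k

/-- The dimension of `G` is `d`: the largest dimension of an induced hypercube. -/
def GraphDim (G : SimpleGraph V) (d : ℕ) : Prop :=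
  (∃ S : Set V, IsCubeDim G S d) ∧ ∀ (S : Set V) (k : ℕ), IsCubeDim G S k → k ≤ d

/-- The Θ-classes of the edges of the induced subgraph on `S`. -/
def cubeClasses (G : SimpleGraph V) (S : Set V) : Set (Set (Sym2 V)) :=
  {C | ThetaClass G C ∧ ∃ x ∈ S, ∃ y ∈ S, G.Adj x y ∧ s(x, y) ∈ C}

/-- With the `v₀`-orientation, `b ∈ S` is the basis of `S`: all edges of `S`
incident to `b` are outgoing from `b`. -/
def IsBasis (G : SimpleGraph V) (v₀ : V) (S : Set V) (b : V) : Prop :=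
  b ∈ S ∧ ∀ w ∈ S, G.Adj b w → G.dist v₀ b < G.dist v₀ w

/-- With the `v₀`-orientation, `b ∈ S` is the anti-basis of `S`: all edges of `S`
incident to `b` are ingoing to `b`. -/
def IsAntiBasis (G : SimpleGraph V) (v₀ : V) (S : Set V) (b : V) : Prop :=
  b ∈ S ∧ ∀ w ∈ S, G.Adj b w → G.dist v₀ w < G.dist v₀ b

/-- `ℰ⁻(v)` : the Θ-classes containing at least one edge ingoing to `v`. -/
def inClasses (G : SimpleGraph V) (v₀ v : V) : Set (Set (Sym2 V)) :=
  {C | ThetaClass G C ∧ ∃ u, G.Adj u v ∧ G.dist v₀ u < G.dist v₀ v ∧ s(u, v) ∈ C}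

/-- The ladder set `L_{u,v}`: classes of the signature `σ_{u,v}` having an
edge incident to `u`. -/
def ladder (G : SimpleGraph V) (u v : V) : Set (Set (Sym2 V)) :=
  {C | C ∈ signature G u v ∧ ∃ w, G.Adj u w ∧ s(u, w) ∈ C}

/-- A POF each of whose classes has an edge outgoing from `u`. -/
def OutgoingPOF (G : SimpleGraph V) (v₀ u : V) (L : Set (Set (Sym2 V))) : Prop :=
  IsPOF G L ∧ ∀ C ∈ L, ∃ w, G.Adj u w ∧ G.dist v₀ u < G.dist v₀ w ∧ s(u, w) ∈ C

/-- A POF each of whose classes has an edge ingoing to `u`. -/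
def IngoingPOF (G : SimpleGraph V) (v₀ u : V) (X : Set (Set (Sym2 V))) : Prop :=
  IsPOF G X ∧ ∀ C ∈ X, ∃ w, G.Adj w u ∧ G.dist v₀ w < G.dist v₀ u ∧ s(w, u) ∈ C

/-- `m` is a median of the triple `x, y, z`. -/
def IsMedian (G : SimpleGraph V) (x y z m : V) : Prop :=
  m ∈ interval G x y ∧ m ∈ interval G y z ∧ m ∈ interval G z x

/-- `b` is the milestone following `a` on the way to `v`: `b` is the anti-basis of
the induced hypercube with basis `a` whose Θ-classes are the ladder set `L_{a,v}`. -/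
def NextMilestone (G : SimpleGraph V) (v₀ v a b : V) : Prop :=
  ∃ S : Set V, IsInducedCube G S ∧ IsBasis G v₀ S a ∧ IsAntiBasis G v₀ S b ∧
    cubeClasses G S = ladder G a v

/-- The milestone set `Π(u,v)`: vertices obtained from `u` by iterating the
next-milestone step towards `v`. -/
def MilestoneSet (G : SimpleGraph V) (v₀ u v : V) : Set V :=
  {p | Relation.ReflTransGen (fun a b => NextMilestone G v₀ v a b) u p}

/-- The penultimate milestone `π̄(u,v)`: the milestone of `Π(u,v)` other than `v`
closest to `v`, i.e. whose next milestone is `v` itself. -/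
def IsPenultimate (G : SimpleGraph V) (v₀ u v p : V) : Prop :=
  p ∈ MilestoneSet G v₀ u v ∧ p ≠ v ∧ NextMilestone G v₀ v p v

/-- A convex set of vertices. -/
def ConvexSet (G : SimpleGraph V) (H : Set V) : Prop :=
  ∀ u ∈ H, ∀ v ∈ H, interval G u v ⊆ H

/-- A gated set of vertices: each vertex has a gate in `H`. -/
def GatedSet (G : SimpleGraph V) (H : Set V) : Prop :=
  ∀ x : V, ∃ g ∈ H, ∀ h ∈ H, g ∈ interval G x h

open SimpleGraph (dist_eq_one_iff_adj)

section Metric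

variable {G : SimpleGraph V} {a b u v w x y z : V}

theorem exists_adj_dist_eq_of_dist_eq_succ {n : ℕ} (h : G.dist x y = n + 1) :
    ∃ x₁, G.Adj x x₁ ∧ G.dist x₁ y = n := by
  obtain ⟨p, hp⟩ := (SimpleGraph.Reachable.of_dist_ne_zero
    (by omega : G.dist x y ≠ 0)).exists_walk_length_eq_dist
  cases p with
  | nil => simp at h
  | cons hadj p =>
    refine ⟨_, hadj, le_antisymm ?_ ?_⟩
    · have := SimpleGraph.dist_le p
      simp only [SimpleGraph.Walk.length_cons] at hp
      omega
    · have := hadj.reachable.dist_triangle_left y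
      rw [dist_eq_one_iff_adj.mpr hadj] at this
      omega

theorem eq_or_adj_of_mem_interval (hG : G.Connected) (h2 : G.dist x y = 2)
    (hw : w ∈ interval G x y) : w = x ∨ w = y ∨ (G.Adj x w ∧ G.Adj w y) := by
  simp only [interval, Set.mem_ofPred_eq, h2] at hw
  rcases Nat.lt_or_ge (G.dist x w) 1 with hxw | hxw
  · exact Or.inl (hG.dist_eq_zero_iff.mp (by omega)).symm
  rcases Nat.lt_or_ge (G.dist w y) 1 with hwy | hwy
  · exact Or.inr (Or.inl (hG.dist_eq_zero_iff.mp (by omega)))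
  exact Or.inr (Or.inr ⟨dist_eq_one_iff_adj.mp (by omega), dist_eq_one_iff_adj.mp (by omega)⟩)

theorem MedianGraph.exists_isMedian (hm : MedianGraph G) (x y z : V) :
    ∃ m, IsMedian G x y z m :=
  (hm.2 x y z).exists

theorem MedianGraph.eq_of_isMedian (hm : MedianGraph G) {m m' : V} (h : IsMedian G x y z m)
    (h' : IsMedian G x y z m') : m = m' :=
  (hm.2 x y z).unique h h'

/-- Median graphs are bipartite: the median of `u, x, y` is `x` or `y`. -/
theorem MedianGraph.dist_adj (hm : MedianGraph G) (hxy : G.Adj x y) (u : V) :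
    G.dist u y = G.dist u x + 1 ∨ G.dist u x = G.dist u y + 1 := by
  obtain ⟨m, hux, hxy', hyu⟩ := hm.exists_isMedian u x y
  simp only [interval, Set.mem_ofPred_eq, dist_eq_one_iff_adj.mpr hxy] at hux hxy' hyu
  have := SimpleGraph.dist_comm (G := G) (u := u) (v := y)
  rcases Nat.eq_zero_or_pos (G.dist x m) with h0 | hpos
  · obtain rfl := hm.1.dist_eq_zero_iff.mp h0
    have := SimpleGraph.dist_comm (G := G) (u := x) (v := u)
    have := SimpleGraph.dist_comm (G := G) (u := y) (v := x)
    omega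
  · obtain rfl := hm.1.dist_eq_zero_iff.mp (show G.dist m y = 0 by omega)
    have := SimpleGraph.dist_comm (G := G) (u := x) (v := m)
    omega

theorem MedianGraph.dist_ne_of_adj (hm : MedianGraph G) (hxy : G.Adj x y) (u : V) :
    G.dist u x ≠ G.dist u y := by
  rcases hm.dist_adj hxy u with h | h <;> omega

theorem MedianGraph.dist_eq_two (hm : MedianGraph G) (hxy : G.Adj x y) (hyz : G.Adj y z)
    (hxz : x ≠ z) : G.dist x z = 2 := by
  have hxy1 := dist_eq_one_iff_adj.mpr hxy
  rcases hm.dist_adj hyz x with h | h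
  · omega
  · exact absurd (hm.1.dist_eq_zero_iff.mp (by omega)) hxz

/-- For an edge `ab`, the halfspace `W(a,b)`. -/
def halfspace (G : SimpleGraph V) (a b : V) : Set V :=
  {w | G.dist w a < G.dist w b}

theorem MedianGraph.notMem_halfspace_iff (hm : MedianGraph G) (hab : G.Adj a b) :
    w ∉ halfspace G a b ↔ w ∈ halfspace G b a := by
  have := hm.dist_ne_of_adj hab w
  simp only [halfspace, Set.mem_ofPred_eq]
  omega

theorem left_mem_halfspace (hab : G.Adj a b) : a ∈ halfspace G a b := by
  simp [halfspace, dist_eq_one_iff_adj.mpr hab]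

/-- A vertex closer to `u` than to `v` but closer to `y` than to `x` would make both `u` and `y`
medians of itself, `v` and `x`. -/
theorem MedianGraph.halfspace_subset_of_isSquare (hm : MedianGraph G) {u v x y : V}
    (hsq : IsSquare G u v x y) : halfspace G u v ⊆ halfspace G x y := by
  obtain ⟨huv, hxy, hux, hvy, huy, hvx⟩ := hsq
  intro w hw
  by_contra hwxy
  simp only [halfspace, Set.mem_ofPred_eq] at hw hwxy
  have := hm.dist_adj hxy w
  have := hm.dist_adj hux w
  have := hm.dist_adj hvy w
  have := hm.dist_eq_two hvy hxy.symm hvx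
  have := dist_eq_one_iff_adj.mpr huv
  have := dist_eq_one_iff_adj.mpr hux.symm
  have := dist_eq_one_iff_adj.mpr hvy
  have := dist_eq_one_iff_adj.mpr hxy.symm
  have := dist_eq_one_iff_adj.mpr hxy
  have := dist_eq_one_iff_adj.mpr hvy.symm
  have := SimpleGraph.dist_comm (G := G) (u := w) (v := x)
  have := SimpleGraph.dist_comm (G := G) (u := u) (v := w)
  have := SimpleGraph.dist_comm (G := G) (u := y) (v := w)
  have := SimpleGraph.dist_comm (G := G) (u := x) (v := u)
  have := SimpleGraph.dist_comm (G := G) (u := v) (v := u)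
  refine huy (hm.eq_of_isMedian (x := w) (y := v) (z := x) ?_ ?_) <;>
    simp only [IsMedian, interval, Set.mem_ofPred_eq] <;> omega

end Metric

section Halfspaces

variable {G : SimpleGraph V} {a b p q u v x y : V}

theorem MedianGraph.eq_and_eq_of_crosses_of_dist_eq_zero (hm : MedianGraph G) (hpq : G.Adj p q)
    (hq : q ∈ halfspace G b a) (hpa : G.dist p a = 0) : p = a ∧ q = b := by
  obtain rfl := hm.1.dist_eq_zero_iff.mp hpa
  refine ⟨rfl, (hm.1.dist_eq_zero_iff.mp ?_).symm⟩
  have := dist_eq_one_iff_adj.mpr hpq.symm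
  simp only [halfspace, Set.mem_ofPred_eq] at hq
  have := SimpleGraph.dist_comm (G := G) (u := q) (v := b)
  omega

/-- Take a neighbour `p₁` of `p` closer to `a`; the median `m` of `p₁, q, b` closes the square. -/
theorem MedianGraph.exists_isSquare_of_crosses (hm : MedianGraph G) (hab : G.Adj a b)
    (hpq : G.Adj p q) (hp : p ∈ halfspace G a b) (hq : q ∈ halfspace G b a) {k : ℕ}
    (hk : G.dist p a = k + 1) :
    ∃ p₁ m, IsSquare G p₁ m p q ∧ G.dist p₁ a = k ∧ p₁ ∈ halfspace G a b ∧
      m ∈ halfspace G b a := by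
  simp only [halfspace, Set.mem_ofPred_eq] at hp hq ⊢
  have := hm.dist_adj hpq a
  have := hm.dist_adj hpq b
  have := SimpleGraph.dist_comm (G := G) (u := p) (v := a)
  have := SimpleGraph.dist_comm (G := G) (u := p) (v := b)
  have := SimpleGraph.dist_comm (G := G) (u := q) (v := a)
  obtain ⟨p₁, hpp₁, hp₁a⟩ := exists_adj_dist_eq_of_dist_eq_succ hk
  have := hm.dist_adj hpp₁ b
  have := hm.1.dist_triangle (u := p₁) (v := a) (w := b)
  have := dist_eq_one_iff_adj.mpr hab
  have := SimpleGraph.dist_comm (G := G) (u := p₁) (v := b)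
  have hp₁q : p₁ ≠ q := by rintro rfl; omega
  obtain ⟨m, hm₁, hm₂, hm₃⟩ := hm.exists_isMedian p₁ q b
  have := SimpleGraph.dist_comm (G := G) (u := q) (v := m)
  have := SimpleGraph.dist_comm (G := G) (u := m) (v := p₁)
  have hp₁q2 := hm.dist_eq_two hpp₁.symm hpq hp₁q
  simp only [interval, Set.mem_ofPred_eq] at hm₂ hm₃
  rcases eq_or_adj_of_mem_interval hm.1 hp₁q2 hm₁ with rfl | rfl | ⟨hp₁m, hmq⟩
  · omega
  · omega
  have := dist_eq_one_iff_adj.mpr hmq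
  have := hm.dist_adj hmq a
  have := SimpleGraph.dist_comm (G := G) (u := m) (v := a)
  have hmp : m ≠ p := by rintro rfl; omega
  exact ⟨p₁, m, ⟨hp₁m, hpq, hpp₁.symm, hmq, hp₁q, hmp⟩, hp₁a, by omega, by omega⟩

theorem MedianGraph.halfspace_subset_and_reflTransGen_theta0 (hm : MedianGraph G)
    (hab : G.Adj a b) (hpq : G.Adj p q) (hp : p ∈ halfspace G a b)
    (hq : q ∈ halfspace G b a) :
    halfspace G a b ⊆ halfspace G p q ∧ Relation.ReflTransGen (Theta0 G) s(a, b) s(p, q) := by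
  induction hk : G.dist p a generalizing p q with
  | zero =>
    obtain ⟨rfl, rfl⟩ := hm.eq_and_eq_of_crosses_of_dist_eq_zero hpq hq hk
    exact ⟨subset_rfl, .refl⟩
  | succ k ih =>
    obtain ⟨p₁, m, hsq, hp₁a, hp₁, hm₁⟩ := hm.exists_isSquare_of_crosses hab hpq hp hq hk
    obtain ⟨hsub, hθ⟩ := ih hsq.1 hp₁ hm₁ hp₁a
    exact ⟨hsub.trans (hm.halfspace_subset_of_isSquare hsq),
      hθ.tail ⟨p₁, m, p, q, hsq, rfl, rfl⟩⟩

theorem MedianGraph.halfspace_eq (hm : MedianGraph G) (hab : G.Adj a b) (hpq : G.Adj p q)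
    (hp : p ∈ halfspace G a b) (hq : q ∈ halfspace G b a) :
    halfspace G a b = halfspace G p q := by
  have hsub := (hm.halfspace_subset_and_reflTransGen_theta0 hab hpq hp hq).1
  have hsub' := (hm.halfspace_subset_and_reflTransGen_theta0 hab.symm hpq.symm hq hp).1
  exact hsub.antisymm (hm.halfspace_subset_and_reflTransGen_theta0 hpq hab
    (hsub (left_mem_halfspace hab)) (hsub' (left_mem_halfspace hab.symm))).1

def CrossesCut (G : SimpleGraph V) (a b : V) (e : Sym2 V) : Prop :=
  ∃ p q, e = s(p, q) ∧ G.Adj p q ∧ p ∈ halfspace G a b ∧ q ∈ halfspace G b a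

theorem MedianGraph.mem_halfspace_of_isSquare (hm : MedianGraph G) (hab : G.Adj a b)
    (hsq : IsSquare G u v x y) (hu : u ∈ halfspace G a b) (hv : v ∈ halfspace G b a) :
    x ∈ halfspace G a b ∧ y ∈ halfspace G b a := by
  obtain ⟨huv, hxy, hux, hvy, huy, hvx⟩ := hsq
  rw [hm.halfspace_eq hab huv hu hv, hm.halfspace_eq hab.symm huv.symm hv hu]
  have := hm.dist_eq_two huv.symm hux hvx
  have := hm.dist_eq_two huv hvy huy
  have := dist_eq_one_iff_adj.mpr hux.symm
  have := dist_eq_one_iff_adj.mpr hvy.symm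
  have := SimpleGraph.dist_comm (G := G) (u := x) (v := v)
  have := SimpleGraph.dist_comm (G := G) (u := y) (v := u)
  simp only [halfspace, Set.mem_ofPred_eq]
  omega

theorem MedianGraph.crossesCut_of_theta0 (hm : MedianGraph G) (hab : G.Adj a b)
    {e f : Sym2 V} (he : CrossesCut G a b e) (hef : Theta0 G e f) : CrossesCut G a b f := by
  obtain ⟨p, q, rfl, -, hp, hq⟩ := he
  obtain ⟨u, v, x, y, hsq, hpq, rfl⟩ := hef
  rcases Sym2.eq_iff.mp hpq with ⟨rfl, rfl⟩ | ⟨rfl, rfl⟩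
  · obtain ⟨hx, hy⟩ := hm.mem_halfspace_of_isSquare hab hsq hp hq
    exact ⟨x, y, rfl, hsq.2.1, hx, hy⟩
  · obtain ⟨hx, hy⟩ := hm.mem_halfspace_of_isSquare hab.symm hsq hq hp
    exact ⟨y, x, Sym2.eq_swap, hsq.2.1.symm, hy, hx⟩

theorem MedianGraph.reflTransGen_theta0_iff_crossesCut (hm : MedianGraph G) (hab : G.Adj a b)
    {f : Sym2 V} : Relation.ReflTransGen (Theta0 G) s(a, b) f ↔ CrossesCut G a b f := by
  constructor
  · intro h
    induction h with
    | refl => exact ⟨a, b, rfl, hab, left_mem_halfspace hab, left_mem_halfspace hab.symm⟩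
    | tail _ hef ih => exact hm.crossesCut_of_theta0 hab ih hef
  · rintro ⟨p, q, rfl, hpq, hp, hq⟩
    exact (hm.halfspace_subset_and_reflTransGen_theta0 hab hpq hp hq).2

end Halfspaces

section ThetaClasses

variable {G : SimpleGraph V} {C C' : Set (Sym2 V)} {a b v w x y z : V}

instance : Std.Symm (Theta0 G) where
  symm := by
    rintro e f ⟨u, v, x, y, ⟨huv, hxy, hux, hvy, huy, hvx⟩, rfl, rfl⟩
    exact ⟨x, y, u, v, ⟨hxy, huv, hux.symm, hvy.symm, hvx.symm, huy.symm⟩, rfl, rfl⟩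

theorem Theta.symm {e f : Sym2 V} (h : Theta G e f) : Theta G f e :=
  ⟨h.2.1, h.1, Std.Symm.symm _ _ h.2.2⟩

theorem Theta.trans {e f g : Sym2 V} (h : Theta G e f) (h' : Theta G f g) : Theta G e g :=
  ⟨h.1, h'.2.1, h.2.2.trans h'.2.2⟩

theorem ThetaClass.eq_setOf_theta (hC : ThetaClass G C) {f : Sym2 V} (hf : f ∈ C) :
    C = {g | Theta G f g} := by
  obtain ⟨e, -, rfl⟩ := hC
  ext g
  exact ⟨fun hg => Theta.trans (Theta.symm hf) hg, fun hg => Theta.trans hf hg⟩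

theorem ThetaClass.eq_of_mem (hC : ThetaClass G C) (hC' : ThetaClass G C') {f : Sym2 V}
    (hf : f ∈ C) (hf' : f ∈ C') : C = C' := by
  rw [hC.eq_setOf_theta hf, hC'.eq_setOf_theta hf']

theorem MedianGraph.mem_thetaClass_iff (hm : MedianGraph G) (hC : ThetaClass G C)
    (hab : G.Adj a b) (habC : s(a, b) ∈ C) (hxy : G.Adj x y) :
    s(x, y) ∈ C ↔ (x ∈ halfspace G a b ↔ y ∉ halfspace G a b) := by
  rw [hC.eq_setOf_theta habC, Set.mem_ofPred_eq, Theta,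
    hm.reflTransGen_theta0_iff_crossesCut hab]
  simp only [G.mem_edgeSet, hab, hxy, true_and, CrossesCut, Sym2.eq_iff]
  have hx := hm.notMem_halfspace_iff (w := x) hab
  have hy := hm.notMem_halfspace_iff (w := y) hab
  constructor
  · rintro ⟨p, q, ⟨rfl, rfl⟩ | ⟨rfl, rfl⟩, -, hp, hq⟩ <;> tauto
  · intro h
    by_cases hxW : x ∈ halfspace G a b
    · exact ⟨x, y, Or.inl ⟨rfl, rfl⟩, hxy, hxW, hy.mp (h.mp hxW)⟩
    · exact ⟨y, x, Or.inr ⟨rfl, rfl⟩, hxy.symm, by tauto, hx.mp hxW⟩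

theorem MedianGraph.mem_halfspace_iff_of_mem_thetaClass_of_ne (hm : MedianGraph G)
    (hC : ThetaClass G C) (hC' : ThetaClass G C') (hne : C ≠ C') (hab : G.Adj a b)
    (habC : s(a, b) ∈ C) (hxy : G.Adj x y) (hxyC' : s(x, y) ∈ C') :
    x ∈ halfspace G a b ↔ y ∈ halfspace G a b := by
  have := (hm.mem_thetaClass_iff hC hab habC hxy).not.mp
    fun h => hne (hC.eq_of_mem hC' h hxyC')
  tauto

theorem MedianGraph.convexSet_halfspace (hm : MedianGraph G) (hab : G.Adj a b) :
    ConvexSet G (halfspace G a b) := by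
  intro u hu v hv w hw
  induction hn : G.dist u w generalizing u with
  | zero => rwa [← hm.1.dist_eq_zero_iff.mp hn]
  | succ n ih =>
    obtain ⟨u₁, huu₁, hu₁w⟩ := exists_adj_dist_eq_of_dist_eq_succ hn
    simp only [interval, Set.mem_ofPred_eq] at hw
    have := hm.1.dist_triangle (u := u₁) (v := w) (w := v)
    have := hm.1.dist_triangle (u := u) (v := u₁) (w := v)
    have := dist_eq_one_iff_adj.mpr huu₁
    have hw₁ : w ∈ interval G u₁ v := by
      simp only [interval, Set.mem_ofPred_eq]
      omega
    refine ih u₁ ?_ hw₁ hu₁w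
    by_contra hu₁
    rw [hm.notMem_halfspace_iff hab] at hu₁
    have hv' := hm.halfspace_eq hab huu₁ hu hu₁ ▸ hv
    have := SimpleGraph.dist_comm (G := G) (u := u) (v := v)
    have := SimpleGraph.dist_comm (G := G) (u := u₁) (v := v)
    simp only [halfspace, Set.mem_ofPred_eq] at hv'
    omega

theorem MedianGraph.eq_of_adj_of_mem_thetaClass (hm : MedianGraph G) (hC : ThetaClass G C)
    (hxy : G.Adj x y) (hxz : G.Adj x z) (hyC : s(x, y) ∈ C) (hzC : s(x, z) ∈ C) : y = z := by
  have hx := left_mem_halfspace hxy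
  have hz : z ∈ halfspace G y x := (hm.notMem_halfspace_iff hxy).mp
    (((hm.mem_thetaClass_iff hC hxy hyC hxz).mp hzC).mp hx)
  by_contra hyz
  have hxI : x ∈ interval G y z := by
    simp only [interval, Set.mem_ofPred_eq, dist_eq_one_iff_adj.mpr hxy.symm,
      dist_eq_one_iff_adj.mpr hxz, hm.dist_eq_two hxy.symm hxz hyz]
  have := hm.convexSet_halfspace hxy.symm y (left_mem_halfspace hxy.symm) z hz hxI
  exact (hm.notMem_halfspace_iff hxy).mpr this hx

theorem MedianGraph.ne_of_orthogonal (hm : MedianGraph G) (hC : ThetaClass G C)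
    (h : Orthogonal G C C') : C ≠ C' := by
  rintro rfl
  obtain ⟨u, v, x, y, ⟨huv, -, hux, -, -, hvx⟩, huvC, -, huxC, -⟩ := h
  exact hvx (hm.eq_of_adj_of_mem_thetaClass hC huv hux huvC huxC)

end ThetaClasses

section Orthogonal

variable {G : SimpleGraph V} {C₁ C₂ : Set (Sym2 V)} {v w₁ w₂ : V}

/-- Some corner of a square witnessing `C₁ ⊥ C₂` lies beyond both `vw₁` and `vw₂`: crossing an
edge of `C₁` switches sides of `vw₁` only, crossing one of `C₂` switches sides of `vw₂` only. -/
theorem MedianGraph.exists_mem_halfspace_inter_of_orthogonal (hm : MedianGraph G)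
    (hC₁ : ThetaClass G C₁) (hC₂ : ThetaClass G C₂) (horth : Orthogonal G C₁ C₂)
    (h₁ : G.Adj w₁ v) (hC₁v : s(w₁, v) ∈ C₁) (h₂ : G.Adj w₂ v) (hC₂v : s(w₂, v) ∈ C₂) :
    ∃ z, z ∈ halfspace G w₁ v ∧ z ∈ halfspace G w₂ v := by
  have hne := hm.ne_of_orthogonal hC₁ horth
  obtain ⟨p, q, r, s, ⟨hpq, hrs, hpr, hqs, -, -⟩, hpqC, hrsC, hprC, hqsC⟩ := horth
  have e_pq₁ := (hm.mem_thetaClass_iff hC₁ h₁ hC₁v hpq).mp hpqC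
  have e_pr₁ := hm.mem_halfspace_iff_of_mem_thetaClass_of_ne hC₁ hC₂ hne h₁ hC₁v hpr hprC
  have e_qs₁ := hm.mem_halfspace_iff_of_mem_thetaClass_of_ne hC₁ hC₂ hne h₁ hC₁v hqs hqsC
  have e_pr₂ := (hm.mem_thetaClass_iff hC₂ h₂ hC₂v hpr).mp hprC
  have e_qs₂ := (hm.mem_thetaClass_iff hC₂ h₂ hC₂v hqs).mp hqsC
  have e_pq₂ := hm.mem_halfspace_iff_of_mem_thetaClass_of_ne hC₂ hC₁ hne.symm h₂ hC₂v hpq hpqC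
  by_cases hp₁ : p ∈ halfspace G w₁ v <;> by_cases hp₂ : p ∈ halfspace G w₂ v
  · exact ⟨p, hp₁, hp₂⟩
  · exact ⟨r, e_pr₁.mp hp₁, e_pr₂.not_left.mp hp₂⟩
  · exact ⟨q, e_pq₁.not_left.mp hp₁, e_pq₂.mp hp₂⟩
  · exact ⟨s, e_qs₁.mp (e_pq₁.not_left.mp hp₁), e_qs₂.not_left.mp (e_pq₂.not.mp hp₂)⟩

/-- The square is completed by the median of `w₁`, `w₂` and a vertex beyond both `vw₁` and
`vw₂`. -/
theorem MedianGraph.exists_adj_adj_of_orthogonal (hm : MedianGraph G)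
    (hC₁ : ThetaClass G C₁) (hC₂ : ThetaClass G C₂) (horth : Orthogonal G C₁ C₂)
    (h₁ : G.Adj v w₁) (hC₁v : s(v, w₁) ∈ C₁) (h₂ : G.Adj v w₂) (hC₂v : s(v, w₂) ∈ C₂) :
    ∃ m, G.Adj w₁ m ∧ G.Adj w₂ m ∧ s(w₂, m) ∈ C₁ ∧ s(w₁, m) ∈ C₂ := by
  have hne := hm.ne_of_orthogonal hC₁ horth
  rw [Sym2.eq_swap] at hC₁v hC₂v
  obtain ⟨z, hz₁, hz₂⟩ := hm.exists_mem_halfspace_inter_of_orthogonal hC₁ hC₂ horth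
    h₁.symm hC₁v h₂.symm hC₂v
  obtain ⟨m, hm₁₂, hm₂z, hmz₁⟩ := hm.exists_isMedian w₁ w₂ z
  have hm₁ := hm.convexSet_halfspace h₁.symm z hz₁ w₁ (left_mem_halfspace h₁.symm) hmz₁
  have hm₂ := hm.convexSet_halfspace h₂.symm w₂ (left_mem_halfspace h₂.symm) z hz₂ hm₂z
  have hv₁ := (hm.notMem_halfspace_iff h₁.symm).mpr (left_mem_halfspace h₁)
  have hv₂ := (hm.notMem_halfspace_iff h₂.symm).mpr (left_mem_halfspace h₂)
  have hw₁ : w₁ ∉ halfspace G w₂ v :=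
    (hm.mem_halfspace_iff_of_mem_thetaClass_of_ne hC₂ hC₁ hne.symm h₂.symm hC₂v
      h₁.symm hC₁v).not.mpr hv₂
  have hw₂ : w₂ ∉ halfspace G w₁ v :=
    (hm.mem_halfspace_iff_of_mem_thetaClass_of_ne hC₁ hC₂ hne h₁.symm hC₁v
      h₂.symm hC₂v).not.mpr hv₁
  have hw₁w₂ : w₁ ≠ w₂ := by rintro rfl; exact hw₁ (left_mem_halfspace h₁.symm)
  rcases eq_or_adj_of_mem_interval hm.1 (hm.dist_eq_two h₁.symm h₂ hw₁w₂) hm₁₂ with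
    rfl | rfl | ⟨hw₁m, hmw₂⟩
  · exact absurd hm₂ hw₁
  · exact absurd hm₁ hw₂
  refine ⟨m, hw₁m, hmw₂.symm, ?_, ?_⟩
  · rw [hm.mem_thetaClass_iff hC₁ h₁.symm hC₁v hmw₂.symm]
    exact iff_of_false hw₂ (not_not_intro hm₁)
  · rw [hm.mem_thetaClass_iff hC₂ h₂.symm hC₂v hw₁m]
    exact iff_of_false hw₁ (not_not_intro hm₂)

end Orthogonal

open Finset
open scoped symmDiff

theorem exists_eq_insert_of_card_symmDiff_eq_one {α : Type*} [DecidableEq α]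
    {A B : Finset α} (h : #(A ∆ B) = 1) :
    ∃ i, (i ∉ A ∧ B = insert i A) ∨ (i ∉ B ∧ A = insert i B) := by
  obtain ⟨i, hi⟩ := card_eq_one.mp h
  have hB : B = A ∆ {i} := by rw [← hi, symmDiff_symmDiff_cancel_left]
  subst hB
  refine ⟨i, ?_⟩
  by_cases hiA : i ∈ A
  · refine Or.inr ⟨by simp [mem_symmDiff, hiA], ?_⟩
    ext j
    by_cases hj : j = i <;> simp [mem_symmDiff, hj, hiA]
  · refine Or.inl ⟨hiA, ?_⟩
    ext j
    by_cases hj : j = i <;> simp [mem_symmDiff, hj, hiA]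

section Cube

variable {G : SimpleGraph V} {ι : Type*} [DecidableEq ι] {C : ι → Set (Sym2 V)}
  {t : Finset ι} {g : Finset ι → V} {v x w : V}

def IsCubeMap (G : SimpleGraph V) (C : ι → Set (Sym2 V)) (t : Finset ι) (g : Finset ι → V) :
    Prop :=
  ∀ B ⊆ t, ∀ i ∈ t, i ∉ B → G.Adj (g B) (g (insert i B)) ∧ s(g B, g (insert i B)) ∈ C i

open Classical in
/-- A junk value `x` if `x` has no neighbour across `D`. -/
noncomputable def partner (G : SimpleGraph V) (D : Set (Sym2 V)) (x : V) : V :=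
  if h : ∃ w, G.Adj x w ∧ s(x, w) ∈ D then h.choose else x

theorem partner_spec {D : Set (Sym2 V)} (h : ∃ w, G.Adj x w ∧ s(x, w) ∈ D) :
    G.Adj x (partner G D x) ∧ s(x, partner G D x) ∈ D := by
  rw [partner, dif_pos h]
  exact h.choose_spec

theorem MedianGraph.partner_eq (hm : MedianGraph G) {D : Set (Sym2 V)} (hD : ThetaClass G D)
    (hw : G.Adj x w) (hwD : s(x, w) ∈ D) : partner G D x = w :=
  hm.eq_of_adj_of_mem_thetaClass hD (partner_spec ⟨w, hw, hwD⟩).1 hw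
    (partner_spec ⟨w, hw, hwD⟩).2 hwD

theorem IsCubeMap.exists_adj_mem (hg : IsCubeMap G C t g) (hm : MedianGraph G)
    {D : Set (Sym2 V)} (hD : ThetaClass G D) (hC : ∀ i ∈ t, ThetaClass G (C i))
    (horth : ∀ i ∈ t, Orthogonal G D (C i)) (hv : ∃ w, G.Adj (g ∅) w ∧ s(g ∅, w) ∈ D) :
    ∀ B ⊆ t, ∃ w, G.Adj (g B) w ∧ s(g B, w) ∈ D := by
  intro B
  induction B using Finset.induction_on with
  | empty => exact fun _ => hv
  | insert j B hjB ih =>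
    intro hB
    have hj := hB (mem_insert_self j B)
    obtain ⟨w, hw, hwD⟩ := ih ((subset_insert j B).trans hB)
    obtain ⟨hstep, hstepC⟩ := hg B ((subset_insert j B).trans hB) j hj hjB
    obtain ⟨m, -, hm, hmD, -⟩ :=
      hm.exists_adj_adj_of_orthogonal hD (hC j hj) (horth j hj) hw hwD hstep hstepC
    exact ⟨m, hm, hmD⟩

/-- The edges of `C i` exist at every vertex of the cube and form squares with its edges. -/
theorem IsCubeMap.extend (hg : IsCubeMap G C t g) (hm : MedianGraph G) {i : ι}
    (hC : ∀ j ∈ insert i t, ThetaClass G (C j)) (horth : ∀ j ∈ t, Orthogonal G (C i) (C j))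
    (hi : i ∉ t) (hv : ∃ w, G.Adj (g ∅) w ∧ s(g ∅, w) ∈ C i) :
    IsCubeMap G C (insert i t)
      (fun B => if i ∈ B then partner G (C i) (g (B.erase i)) else g B) := by
  have hCi := hC i (mem_insert_self i t)
  have hpartner := hg.exists_adj_mem hm hCi (fun j hj => hC j (mem_insert_of_mem hj)) horth hv
  intro B hB j hj hjB
  by_cases hiB : i ∈ B
  · have hji : j ≠ i := fun h => hjB (h ▸ hiB)
    have hjt : j ∈ t := (mem_insert.mp hj).resolve_left hji
    have hB' : B.erase i ⊆ t := subset_insert_iff.mp hB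
    have hjB' : j ∉ B.erase i := fun h => hjB (mem_of_mem_erase h)
    simp only [if_pos hiB, if_pos (mem_insert_of_mem hiB), erase_insert_of_ne hji]
    obtain ⟨hstep, hstepC⟩ := hg _ hB' j hjt hjB'
    obtain ⟨hw, hwC⟩ := partner_spec (hpartner _ hB')
    obtain ⟨m, hwm, hstepm, hmCi, hmCj⟩ :=
      hm.exists_adj_adj_of_orthogonal hCi (hC j hj) (horth j hjt) hw hwC hstep hstepC
    rw [hm.partner_eq hCi hstepm hmCi]
    exact ⟨hwm, hmCj⟩
  · have hBt : B ⊆ t := (subset_insert_iff_of_notMem hiB).mp hB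
    by_cases hji : j = i
    · subst hji
      simp only [if_neg hiB, if_pos (mem_insert_self j B), erase_insert hiB]
      exact partner_spec (hpartner B hBt)
    · have hiB' : i ∉ insert j B := fun h => hiB ((mem_insert.mp h).resolve_left (Ne.symm hji))
      simp only [if_neg hiB, if_neg hiB']
      exact hg B hBt j ((mem_insert.mp hj).resolve_left hji) hjB

theorem MedianGraph.exists_isCubeMap (hm : MedianGraph G) (hC : ∀ i, ThetaClass G (C i))
    (horth : Pairwise fun i j => Orthogonal G (C i) (C j))
    (hv : ∀ i, ∃ w, G.Adj v w ∧ s(v, w) ∈ C i) (t : Finset ι) :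
    ∃ g, g ∅ = v ∧ IsCubeMap G C t g := by
  induction t using Finset.induction_on with
  | empty => exact ⟨fun _ => v, rfl, by simp [IsCubeMap]⟩
  | insert i t hi ih =>
    obtain ⟨g, hg0, hg⟩ := ih
    refine ⟨_, by simp [hg0], hg.extend hm (fun j _ => hC j) ?_ hi (hg0 ▸ hv i)⟩
    exact fun j hj => horth fun h => hi (h ▸ hj)

variable [Fintype ι]

theorem IsCubeMap.adj_singleton (hg : IsCubeMap G C univ g) (i : ι) :
    G.Adj (g ∅) (g {i}) ∧ s(g ∅, g {i}) ∈ C i := by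
  simpa using hg ∅ (empty_subset _) i (mem_univ i) (notMem_empty i)

theorem IsCubeMap.mem_iff_mem_halfspace (hg : IsCubeMap G C univ g) (hm : MedianGraph G)
    (hC : ∀ i, ThetaClass G (C i)) (hinj : Function.Injective C) (i : ι) (B : Finset ι) :
    i ∈ B ↔ g B ∈ halfspace G (g {i}) (g ∅) := by
  obtain ⟨hadj, hadjC⟩ := hg.adj_singleton i
  rw [Sym2.eq_swap] at hadjC
  induction B using Finset.induction_on with
  | empty =>
    simp only [notMem_empty, false_iff]
    exact (hm.notMem_halfspace_iff hadj.symm).mpr (left_mem_halfspace hadj)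
  | insert j B hjB ih =>
    obtain ⟨hstep, hstepC⟩ := hg B (subset_univ _) j (mem_univ j) hjB
    by_cases hij : i = j
    · subst hij
      simp only [mem_insert_self, true_iff]
      exact ((hm.mem_thetaClass_iff (hC i) hadj.symm hadjC hstep).mp hstepC).not_left.mp
        (ih.not.mp hjB)
    · rw [mem_insert, or_iff_right hij, ih]
      exact hm.mem_halfspace_iff_of_mem_thetaClass_of_ne (hC i) (hC j) (hinj.ne hij)
        hadj.symm hadjC hstep hstepC

theorem IsCubeMap.injective (hg : IsCubeMap G C univ g) (hm : MedianGraph G)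
    (hC : ∀ i, ThetaClass G (C i)) (hinj : Function.Injective C) : Function.Injective g := by
  intro A B h
  ext i
  rw [hg.mem_iff_mem_halfspace hm hC hinj, h, ← hg.mem_iff_mem_halfspace hm hC hinj]

theorem IsCubeMap.mem_symmDiff_iff (hg : IsCubeMap G C univ g) (hm : MedianGraph G)
    (hC : ∀ i, ThetaClass G (C i)) (hinj : Function.Injective C) {A B : Finset ι}
    (hAB : G.Adj (g A) (g B)) (i : ι) : i ∈ A ∆ B ↔ s(g A, g B) ∈ C i := by
  obtain ⟨hadj, hadjC⟩ := hg.adj_singleton i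
  rw [Sym2.eq_swap] at hadjC
  rw [hm.mem_thetaClass_iff (hC i) hadj.symm hadjC hAB, ← hg.mem_iff_mem_halfspace hm hC hinj,
    ← hg.mem_iff_mem_halfspace hm hC hinj, mem_symmDiff]
  tauto

theorem IsCubeMap.exists_symmDiff_eq_singleton (hg : IsCubeMap G C univ g)
    (hm : MedianGraph G) (hC : ∀ i, ThetaClass G (C i)) (hinj : Function.Injective C)
    {A B : Finset ι} (hAB : G.Adj (g A) (g B)) : ∃ i, A ∆ B = {i} ∧ s(g A, g B) ∈ C i := by
  obtain ⟨i, hi⟩ := symmDiff_nonempty.mpr (fun h => hAB.ne (congrArg g h))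
  have hiC := (hg.mem_symmDiff_iff hm hC hinj hAB i).mp hi
  refine ⟨i, eq_singleton_iff_unique_mem.mpr ⟨hi, fun j hj => ?_⟩, hiC⟩
  exact hinj ((hC j).eq_of_mem (hC i) ((hg.mem_symmDiff_iff hm hC hinj hAB j).mp hj) hiC)

theorem IsCubeMap.adj_iff (hg : IsCubeMap G C univ g) (hm : MedianGraph G)
    (hC : ∀ i, ThetaClass G (C i)) (hinj : Function.Injective C) {A B : Finset ι} :
    G.Adj (g A) (g B) ↔ #(A ∆ B) = 1 := by
  constructor
  · intro hAB
    obtain ⟨i, hi, -⟩ := hg.exists_symmDiff_eq_singleton hm hC hinj hAB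
    rw [hi, card_singleton]
  · intro h
    obtain ⟨i, ⟨hiA, rfl⟩ | ⟨hiB, rfl⟩⟩ := exists_eq_insert_of_card_symmDiff_eq_one h
    · exact (hg A (subset_univ A) i (mem_univ i) hiA).1
    · exact (hg B (subset_univ B) i (mem_univ i) hiB).1.symm

theorem IsCubeMap.isCubeDim_range {k : ℕ} {C : Fin k → Set (Sym2 V)}
    {g : Finset (Fin k) → V} (hg : IsCubeMap G C univ g) (hm : MedianGraph G)
    (hC : ∀ i, ThetaClass G (C i)) (hinj : Function.Injective C) :
    IsCubeDim G (Set.range g) k :=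
  ⟨SimpleGraph.Iso.symm
    { toEquiv := Equiv.ofInjective g (hg.injective hm hC hinj)
      map_rel_iff' := hg.adj_iff hm hC hinj }⟩

theorem IsCubeMap.cubeClasses_range (hg : IsCubeMap G C univ g) (hm : MedianGraph G)
    (hC : ∀ i, ThetaClass G (C i)) (hinj : Function.Injective C) :
    cubeClasses G (Set.range g) = Set.range C := by
  ext D
  constructor
  · rintro ⟨hD, _, ⟨A, rfl⟩, _, ⟨B, rfl⟩, hAB, hABD⟩
    obtain ⟨i, -, hi⟩ := hg.exists_symmDiff_eq_singleton hm hC hinj hAB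
    exact ⟨i, (hC i).eq_of_mem hD hi hABD⟩
  · rintro ⟨i, rfl⟩
    exact ⟨hC i, _, ⟨∅, rfl⟩, _, ⟨{i}, rfl⟩, hg.adj_singleton i⟩

theorem IsCubeMap.mem_range_of_adj (hg : IsCubeMap G C univ g) (hm : MedianGraph G)
    (hC : ∀ i, ThetaClass G (C i)) {i : ι} (hw : G.Adj (g ∅) w) (hwC : s(g ∅, w) ∈ C i) :
    w ∈ Set.range g :=
  ⟨{i}, hm.eq_of_adj_of_mem_thetaClass (hC i) (hg.adj_singleton i).1 hw
    (hg.adj_singleton i).2 hwC⟩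

end Cube

/-- In a median graph, a POF `X` all of whose classes have an edge
incident to `v` gives rise to an induced hypercube of dimension `|X|` containing
`v` and all the edges of classes of `X` incident to `v`, whose Θ-classes are
exactly `X`. -/
theorem pof_adjacent_to_vertex_spans_cube {V : Type*} [Fintype V]
    (G : SimpleGraph V) (hmed : MedianGraph G)
    (X : Set (Set (Sym2 V))) (hX : IsPOF G X) (v : V)
    (hadj : ∀ C ∈ X, ∃ w, G.Adj v w ∧ s(v, w) ∈ C) :
    ∃ S : Set V, IsCubeDim G S X.ncard ∧ v ∈ S ∧
      (∀ C ∈ X, ∀ w, G.Adj v w → s(v, w) ∈ C → w ∈ S) ∧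
      cubeClasses G S = X := by
  let e : Fin X.ncard ≃ X := (Finite.equivFin X).symm
  let C : Fin X.ncard → Set (Sym2 V) := fun i => e i
  have hC : ∀ i, ThetaClass G (C i) := fun i => hX.1 _ (e i).2
  have hinj : Function.Injective C := Subtype.val_injective.comp e.injective
  have hrange : Set.range C = X := (e.surjective.range_comp _).trans Subtype.range_coe
  obtain ⟨g, rfl, hg⟩ := hmed.exists_isCubeMap hC
    (fun i j hij => hX.2 _ (e i).2 _ (e j).2 (hinj.ne hij)) (fun i => hadj _ (e i).2) univ
  refine ⟨Set.range g, hg.isCubeDim_range hmed hC hinj, ⟨∅, rfl⟩, ?_,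
    (hg.cubeClasses_range hmed hC hinj).trans hrange⟩
  intro D hD w hw hwD
  obtain ⟨i, rfl⟩ := hrange.symm ▸ hD
  exact hg.mem_range_of_adj hmed hC hw hwD

end MedianPaper
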